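/- arXiv:math/0212230 — 2 statements merged into one kernel-verified Lean document; each statement's English description precedes it below -/
import Mathlib

section
/- For integers 1 ≤ n < N and real D ≥ 2, the quantity (n/N)^{1/D} − Γ(n + 1/D)Γ(N) / (Γ(n)Γ(N + 1/D)) is nonnegative. -/
/-!
For `0 ≤ s ≤ 1` the ratio `Γ(x + s) / (Γ(x) x^s)` does not decrease when `x` is replaced by
`x + 1`: by the functional equation this is `x (x + 1)^s ≤ x^s (x + s)`, i.e. weighted AM-GM
`x^(1-s) (x + 1)^s ≤ (1 - s) x + s (x + 1)`. Comparing the ratio at `n` and at `N = n + (N - n)`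
with `s = 1 / D` gives the claim.
-/

open Real

noncomputable def gammaRatio (s x : ℝ) : ℝ := Gamma (x + s) / (Gamma x * x ^ s)

lemma mul_add_one_rpow_le {s x : ℝ} (hs0 : 0 ≤ s) (hs1 : s ≤ 1) (hx : 0 ≤ x) :
    x * (x + 1) ^ s ≤ x ^ s * (x + s) := by
  have amgm : x ^ (1 - s) * (x + 1) ^ s ≤ (1 - s) * x + s * (x + 1) :=
    geom_mean_le_arith_mean2_weighted (by linarith) hs0 hx (by linarith) (by ring)
  calc x * (x + 1) ^ s = x ^ s * (x ^ (1 - s) * (x + 1) ^ s) := by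
        rw [← mul_assoc, ← rpow_add' hx (by norm_num), add_sub_cancel, rpow_one]
    _ ≤ x ^ s * ((1 - s) * x + s * (x + 1)) := by gcongr
    _ = x ^ s * (x + s) := by ring

lemma gammaRatio_le_add_one {s x : ℝ} (hs0 : 0 ≤ s) (hs1 : s ≤ 1) (hx : 0 < x) :
    gammaRatio s x ≤ gammaRatio s (x + 1) := by
  rw [gammaRatio, gammaRatio, add_right_comm, Gamma_add_one hx.ne',
    Gamma_add_one (by positivity), div_le_div_iff₀ (by positivity) (by positivity)]
  have key := mul_add_one_rpow_le hs0 hs1 hx.le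
  calc Gamma (x + s) * (x * Gamma x * (x + 1) ^ s)
      = Gamma (x + s) * Gamma x * (x * (x + 1) ^ s) := by ring
    _ ≤ Gamma (x + s) * Gamma x * (x ^ s * (x + s)) := by gcongr
    _ = (x + s) * Gamma (x + s) * (Gamma x * x ^ s) := by ring

lemma gammaRatio_le_add_nat {s x : ℝ} (hs0 : 0 ≤ s) (hs1 : s ≤ 1) (hx : 0 < x) (k : ℕ) :
    gammaRatio s x ≤ gammaRatio s (x + k) := by
  induction k with
  | zero => simp
  | succ k ih =>
    rw [Nat.cast_succ, ← add_assoc]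
    exact ih.trans (gammaRatio_le_add_one hs0 hs1 (by positivity))

theorem stmt_6 (N n : ℕ) (hn : 1 ≤ n) (hnN : n < N) (D : ℝ) (hD : 2 ≤ D) :
    0 ≤ ((n : ℝ) / N) ^ (1 / D)
      - Real.Gamma ((n : ℝ) + 1 / D) * Real.Gamma N
        / (Real.Gamma n * Real.Gamma ((N : ℝ) + 1 / D)) := by
  set s := 1 / D
  have hs0 : 0 ≤ s := by positivity
  have hs1 : s ≤ 1 := by rw [div_le_one (by linarith)]; linarith
  have hn0 : (0 : ℝ) < n := by exact_mod_cast hn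
  have hN0 : (0 : ℝ) < N := by exact_mod_cast Nat.zero_lt_of_lt hnN
  have hmono := gammaRatio_le_add_nat hs0 hs1 hn0 (N - n)
  rw [Nat.cast_sub hnN.le, add_sub_cancel, gammaRatio, gammaRatio,
    div_le_div_iff₀ (by positivity) (by positivity)] at hmono
  rw [sub_nonneg, div_rpow hn0.le hN0.le, div_le_div_iff₀ (by positivity) (by positivity)]
  linear_combination hmono
end

section
/- For 0 < s < 1, the function f(x) = Γ(x + s)/(Γ(x)·x^s) is strictly increasing on (0, ∞) and tends to 1 as x → ∞; in particular Γ(x + s)/Γ(x) < x^s for all x > 0. -/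
open Filter

/-!
Write `f(x) = Γ(x + s) / (Γ(x) x^s)`. Log-convexity of `Γ` (Hölder's inequality for Euler's
integral) gives Gautschi's bounds `(x / (x + s))^(1 - s) ≤ f(x) ≤ 1`, so `f → 1`.
The functional equation `Γ(x + 1) = x Γ(x)` gives
`log f(x) - log f(x + 1) = (1 - s) log x + s log (x + 1) - log (x + s)`, the Jensen gap of `log`
at `x` and `x + 1`, whose derivative `s (1 - s) / (x (x + 1) (x + s))` is positive.
A function converging at infinity whose forward difference `φ x - φ (x + 1)` is strictly
increasing is itself strictly increasing (telescope `φ a - φ b` along `a + k`, `b + k`), so `f` is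
strictly increasing, and `f(x) < f(x + 1) ≤ 1`.
-/

open Real Set Topology

theorem strictMonoOn_of_tendsto_of_strictMonoOn_sub_add_one {φ : ℝ → ℝ} {c ℓ : ℝ}
    (hΔ : StrictMonoOn (fun x => φ x - φ (x + 1)) (Ioi c)) (hφ : Tendsto φ atTop (𝓝 ℓ)) :
    StrictMonoOn φ (Ioi c) := by
  intro a ha b hb hab
  have telescope : ∀ n : ℕ, φ a - φ b ≤
      (φ a - φ (a + 1)) - (φ b - φ (b + 1)) + (φ (a + (n + 1)) - φ (b + (n + 1))) := by
    intro n
    induction n with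
    | zero => norm_num; linarith
    | succ n ih =>
      have hn : (0 : ℝ) ≤ n := n.cast_nonneg
      have := hΔ (a := a + (n + 1)) (b := b + (n + 1)) (by simp only [mem_Ioi] at ha ⊢; linarith)
        (by simp only [mem_Ioi] at hb ⊢; linarith) (by linarith)
      push_cast
      simp only [← add_assoc] at this ih ⊢
      linarith
  have htail : Tendsto (fun n : ℕ => φ (a + (n + 1)) - φ (b + (n + 1))) atTop (𝓝 0) := by
    have hshift : ∀ t : ℝ, Tendsto (fun n : ℕ => φ (t + (n + 1))) atTop (𝓝 ℓ) := fun t =>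
      hφ.comp <| tendsto_atTop_add_const_left _ t <|
        tendsto_atTop_add_const_right _ 1 tendsto_natCast_atTop_atTop
    simpa using (hshift a).sub (hshift b)
  have := ge_of_tendsto' (htail.const_add _) telescope
  linarith [hΔ ha hb hab]

namespace Real

section Gautschi

variable {s x : ℝ}

theorem Gamma_add_le_Gamma_mul_rpow (hs₀ : 0 < s) (hs₁ : s < 1) (hx : 0 < x) :
    Gamma (x + s) ≤ Gamma x * x ^ s := by
  have h := Gamma_mul_add_mul_le_rpow_Gamma_mul_rpow_Gamma hx (by linarith : 0 < x + 1)
    (sub_pos.2 hs₁) hs₀ (sub_add_cancel 1 s)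
  rwa [show (1 - s) * x + s * (x + 1) = x + s by ring, Gamma_add_one hx.ne',
    mul_rpow hx.le (Gamma_pos_of_pos hx).le, ← mul_assoc, mul_comm _ (x ^ s), mul_assoc,
    ← rpow_add (Gamma_pos_of_pos hx), sub_add_cancel, rpow_one, mul_comm] at h

theorem mul_Gamma_le_rpow_mul_Gamma_add (hs₀ : 0 < s) (hs₁ : s < 1) (hx : 0 < x) :
    x * Gamma x ≤ (x + s) ^ (1 - s) * Gamma (x + s) := by
  have hxs : 0 < x + s := by linarith
  have h := Gamma_mul_add_mul_le_rpow_Gamma_mul_rpow_Gamma hxs (by linarith : 0 < x + s + 1)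
    hs₀ (sub_pos.2 hs₁) (add_sub_cancel s 1)
  rwa [show s * (x + s) + (1 - s) * (x + s + 1) = x + 1 by ring, Gamma_add_one hx.ne',
    Gamma_add_one hxs.ne', mul_rpow hxs.le (Gamma_pos_of_pos hxs).le, ← mul_assoc,
    mul_comm _ ((x + s) ^ (1 - s)), mul_assoc, ← rpow_add (Gamma_pos_of_pos hxs), add_sub_cancel,
    rpow_one] at h

theorem strictMonoOn_mul_log_add_mul_log_add_one_sub_log_add (hs₀ : 0 < s) (hs₁ : s < 1) :
    StrictMonoOn (fun x => (1 - s) * log x + s * log (x + 1) - log (x + s)) (Ioi 0) := by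
  have hderiv : ∀ x : ℝ, 0 < x → HasDerivAt
      (fun x => (1 - s) * log x + s * log (x + 1) - log (x + s))
      (s * (1 - s) / (x * (x + 1) * (x + s))) x := by
    intro x hx
    refine ((((hasDerivAt_log hx.ne').const_mul (1 - s)).add
      ((((hasDerivAt_id x).add_const 1).log (by simp; linarith)).const_mul s)).sub
      (((hasDerivAt_id x).add_const s).log (by simp; linarith))).congr_deriv ?_
    simp only [id]
    field_simp
    ring
  refine strictMonoOn_of_deriv_pos (convex_Ioi 0)
    (fun x hx => (hderiv x hx).continuousAt.continuousWithinAt) fun x hx => ?_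
  rw [interior_Ioi] at hx
  have hx : 0 < x := hx
  rw [(hderiv x hx).deriv]
  have := sub_pos.2 hs₁
  positivity

noncomputable def gautschiRatio (s x : ℝ) : ℝ := Gamma (x + s) / (Gamma x * x ^ s)

theorem gautschiRatio_pos (hs : 0 ≤ s) (hx : 0 < x) : 0 < gautschiRatio s x := by
  have := Gamma_pos_of_pos hx
  have := Gamma_pos_of_pos (add_pos_of_pos_of_nonneg hx hs)
  have := rpow_pos_of_pos hx s
  unfold gautschiRatio
  positivity

theorem gautschiRatio_le_one (hs₀ : 0 < s) (hs₁ : s < 1) (hx : 0 < x) : gautschiRatio s x ≤ 1 :=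
  div_le_one_of_le₀ (Gamma_add_le_Gamma_mul_rpow hs₀ hs₁ hx)
    (mul_pos (Gamma_pos_of_pos hx) (rpow_pos_of_pos hx s)).le

theorem rpow_div_add_le_gautschiRatio (hs₀ : 0 < s) (hs₁ : s < 1) (hx : 0 < x) :
    (x / (x + s)) ^ (1 - s) ≤ gautschiRatio s x := by
  have hxs : 0 < x + s := by linarith
  rw [gautschiRatio, div_rpow hx.le hxs.le, div_le_div_iff₀ (rpow_pos_of_pos hxs _)
    (mul_pos (Gamma_pos_of_pos hx) (rpow_pos_of_pos hx s))]
  calc x ^ (1 - s) * (Gamma x * x ^ s) = x * Gamma x := by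
        rw [mul_left_comm, ← rpow_add hx, sub_add_cancel, rpow_one, mul_comm]
    _ ≤ (x + s) ^ (1 - s) * Gamma (x + s) := mul_Gamma_le_rpow_mul_Gamma_add hs₀ hs₁ hx
    _ = Gamma (x + s) * (x + s) ^ (1 - s) := mul_comm _ _

theorem tendsto_gautschiRatio_atTop (hs₀ : 0 < s) (hs₁ : s < 1) :
    Tendsto (gautschiRatio s) atTop (𝓝 1) := by
  have hquot : Tendsto (fun x : ℝ => x / (x + s)) atTop (𝓝 1) := by
    have h := (tendsto_const_nhds (x := s)).div_atTop (tendsto_atTop_add_const_right _ s tendsto_id)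
    refine (by simpa using h.const_sub 1 : Tendsto (fun x => 1 - s / (x + s)) atTop (𝓝 1)).congr' ?_
    filter_upwards [eventually_gt_atTop 0] with x hx
    field_simp
    ring
  have hlower : Tendsto (fun x : ℝ => (x / (x + s)) ^ (1 - s)) atTop (𝓝 1) := by
    simpa using hquot.rpow_const (p := 1 - s) (Or.inl one_ne_zero)
  refine tendsto_of_tendsto_of_tendsto_of_le_of_le' hlower tendsto_const_nhds ?_ ?_ <;>
    filter_upwards [eventually_gt_atTop 0] with x hx
  exacts [rpow_div_add_le_gautschiRatio hs₀ hs₁ hx, gautschiRatio_le_one hs₀ hs₁ hx]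

theorem log_gautschiRatio_sub_log_gautschiRatio_add_one (hs : 0 ≤ s) (hx : 0 < x) :
    log (gautschiRatio s x) - log (gautschiRatio s (x + 1)) =
      (1 - s) * log x + s * log (x + 1) - log (x + s) := by
  have hxs : 0 < x + s := add_pos_of_pos_of_nonneg hx hs
  have hlog : ∀ y, 0 < y →
      log (gautschiRatio s y) = log (Gamma (y + s)) - log (Gamma y) - s * log y := by
    intro y hy
    have := Gamma_pos_of_pos hy
    rw [gautschiRatio, log_div (Gamma_pos_of_pos (add_pos_of_pos_of_nonneg hy hs)).ne'
      (by positivity), log_mul this.ne' (rpow_pos_of_pos hy s).ne', log_rpow hy]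
    ring
  rw [hlog x hx, hlog (x + 1) (by linarith), add_right_comm, Gamma_add_one hxs.ne',
    Gamma_add_one hx.ne', log_mul hxs.ne' (Gamma_pos_of_pos hxs).ne',
    log_mul hx.ne' (Gamma_pos_of_pos hx).ne']
  ring

theorem strictMonoOn_gautschiRatio (hs₀ : 0 < s) (hs₁ : s < 1) :
    StrictMonoOn (gautschiRatio s) (Ioi 0) := by
  have hlog : StrictMonoOn (fun x => log (gautschiRatio s x)) (Ioi 0) := by
    refine strictMonoOn_of_tendsto_of_strictMonoOn_sub_add_one ?_
      ((tendsto_gautschiRatio_atTop hs₀ hs₁).log one_ne_zero)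
    exact (strictMonoOn_mul_log_add_mul_log_add_one_sub_log_add hs₀ hs₁).congr fun x hx =>
      (log_gautschiRatio_sub_log_gautschiRatio_add_one hs₀.le hx).symm
  intro a ha b hb hab
  exact (log_lt_log_iff (gautschiRatio_pos hs₀.le ha) (gautschiRatio_pos hs₀.le hb)).1
    (hlog ha hb hab)

theorem Gamma_add_div_Gamma_lt_rpow (hs₀ : 0 < s) (hs₁ : s < 1) (hx : 0 < x) :
    Gamma (x + s) / Gamma x < x ^ s := by
  have hlt : gautschiRatio s x < 1 :=
    (strictMonoOn_gautschiRatio hs₀ hs₁ hx (mem_Ioi.2 (by linarith)) (lt_add_one x)).trans_le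
      (gautschiRatio_le_one hs₀ hs₁ (by linarith))
  rwa [gautschiRatio, div_mul_eq_div_div, div_lt_one (rpow_pos_of_pos hx s)] at hlt

end Gautschi

end Real

theorem stmt_16 (s : ℝ) (hs : 0 < s) (hs' : s < 1) :
    StrictMonoOn (fun x : ℝ => Real.Gamma (x + s) / (Real.Gamma x * x ^ s)) (Set.Ioi 0)
    ∧ Tendsto (fun x : ℝ => Real.Gamma (x + s) / (Real.Gamma x * x ^ s)) atTop (nhds 1)
    ∧ ∀ x : ℝ, 0 < x → Real.Gamma (x + s) / Real.Gamma x < x ^ s :=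
  ⟨strictMonoOn_gautschiRatio hs hs', tendsto_gautschiRatio_atTop hs hs',
    fun _ hx => Gamma_add_div_Gamma_lt_rpow hs hs' hx⟩
end
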